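/- Under the convergence condition, the characteristic function F_𝒥 is analytic (complex differentiable) at every point of ℂ₀^λ, and for every z ∈ ℂ₀^λ one has F_𝒥(z) = lim_{n→∞} 𝔉((γ_k²/(λ_k − z))_{k=−n}^{n}), the convergence being locally uniform on ℂ₀^λ. -/

import Mathlib

open Filter Topology
open scoped Classical

noncomputable section

namespace Jacobi

/-- Admissible index tuples `k : Fin (m+1) → ℤ` with gaps `≥ 2` (an `(m+1)`-tuple,
corresponding to the `m`-th summand, `m ≥ 1`, in the paper). -/
def Tup (m : ℕ) : Type :=
  {k : Fin (m + 1) → ℤ // ∀ j : Fin m, k j.castSucc + 2 ≤ k j.succ}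

/-- The function `𝔉` of Stampach--Stovicek. -/
def FF (x : ℤ → ℂ) : ℂ :=
  1 + ∑' m : ℕ, (-1 : ℂ) ^ (m + 1) * ∑' k : Tup m, ∏ j, x (k.1 j) * x (k.1 j + 1)

/-- `𝔉` applied to the restriction of `x` to `s` (extension by zeros). -/
def FFon (s : Set ℤ) (x : ℤ → ℂ) : ℂ := FF (s.indicator x)

/-- `ℂ₀^λ`. -/
def C0 (lam : ℤ → ℂ) : Set ℂ := (closure (Set.range lam))ᶜ

/-- `der λ`: the set of (finite) accumulation points of the sequence `λ`. -/
def der (lam : ℤ → ℂ) : Set ℂ := {z | MapClusterPt z Filter.cofinite lam}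

/-- The basic convergence condition (at one point of `ℂ₀^λ`). -/
def ConvCond (lam w : ℤ → ℂ) : Prop :=
  ∃ z₀ ∈ C0 lam, Summable fun n : ℤ => ‖w n ^ 2 / ((lam n - z₀) * (lam (n + 1) - z₀))‖

/-- The characteristic function `F_𝒥`. -/
def charF (lam γ : ℤ → ℂ) (z : ℂ) : ℂ := FF fun n => γ n ^ 2 / (z - lam n)

/-- `r(z)`. -/
def rz (lam : ℤ → ℂ) (z : ℂ) : ℕ := Set.ncard {n : ℤ | lam n = z}

/-- `r₊(z)`. -/
def rp (lam : ℤ → ℂ) (z : ℂ) : ℕ := Set.ncard {n : ℤ | 0 < n ∧ lam n = z}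

/-- `r₋(z)`. -/
def rm (lam : ℤ → ℂ) (z : ℂ) : ℕ := Set.ncard {n : ℤ | n ≤ 0 ∧ lam n = z}

/-- `𝒫_n(z)`. -/
def Pz (lam w : ℤ → ℂ) (z : ℂ) (n : ℤ) : ℂ :=
  if 0 ≤ n then ∏ k ∈ Finset.Icc (1 : ℤ) n, w (k - 1) / (z - lam k)
  else ∏ k ∈ Finset.Icc (n + 1) (0 : ℤ), (z - lam k) / w (k - 1)

/-- `𝔉((γ_k²/(λ_k − z))_{k=n}^{∞})`. -/
def Fplus (lam γ : ℤ → ℂ) (z : ℂ) (n : ℤ) : ℂ :=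
  FFon {k | n ≤ k} fun k => γ k ^ 2 / (lam k - z)

/-- `𝔉((γ_k²/(λ_k − z))_{k=−∞}^{n})`. -/
def Fminus (lam γ : ℤ → ℂ) (z : ℂ) (n : ℤ) : ℂ :=
  FFon {k | k ≤ n} fun k => γ k ^ 2 / (lam k - z)

/-- `f_n(z)` for `z ∈ ℂ₀^λ`. -/
def fSol₀ (lam w γ : ℤ → ℂ) (z : ℂ) (n : ℤ) : ℂ :=
  Pz lam w z n * Fplus lam γ z (n + 1)

/-- `g_n(z)` for `z ∈ ℂ₀^λ`. -/
def gSol₀ (lam w γ : ℤ → ℂ) (z : ℂ) (n : ℤ) : ℂ :=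
  (w (n - 1) * Pz lam w z (n - 1))⁻¹ * Fminus lam γ z (n - 1)

/-- `f_n(z)` extended to `ℂ ∖ der λ` by the limit formula. -/
def fSol (lam w γ : ℤ → ℂ) (z : ℂ) (n : ℤ) : ℂ :=
  if z ∈ C0 lam then fSol₀ lam w γ z n
  else limUnder (𝓝[C0 lam] z) fun u => (u - z) ^ rp lam z * fSol₀ lam w γ u n

/-- `g_n(z)` extended to `ℂ ∖ der λ` by the limit formula. -/
def gSol (lam w γ : ℤ → ℂ) (z : ℂ) (n : ℤ) : ℂ :=
  if z ∈ C0 lam then gSol₀ lam w γ z n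
  else limUnder (𝓝[C0 lam] z) fun u => (u - z) ^ rm lam z * gSol₀ lam w γ u n

/-- The extended zero set `𝔷(𝒥)` of the characteristic function. -/
def Zset (lam w γ : ℤ → ℂ) : Set ℂ :=
  {z | z ∉ der lam ∧
    Tendsto (fun u => (u - z) ^ rz lam z * charF lam γ u) (𝓝[C0 lam] z) (𝓝 0)}

/-- The Hilbert space `ℓ²(ℤ)`. -/
abbrev ℓ2 : Type := lp (fun _ : ℤ => ℂ) 2

/-- The formal Jacobi matrix acting on sequences. -/
def Jop (lam w : ℤ → ℂ) (u : ℤ → ℂ) : ℤ → ℂ := fun n =>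
  w (n - 1) * u (n - 1) + lam n * u n + w n * u (n + 1)

lemma Jop_add (lam w : ℤ → ℂ) (u v : ℤ → ℂ) :
    Jop lam w (u + v) = Jop lam w u + Jop lam w v := by
  funext n; simp [Jop]; ring

lemma Jop_smul (lam w : ℤ → ℂ) (c : ℂ) (u : ℤ → ℂ) :
    Jop lam w (c • u) = c • Jop lam w u := by
  funext n; simp [Jop]; ring

/-- The domain of the maximal operator. -/
def JmaxDom (lam w : ℤ → ℂ) : Submodule ℂ ℓ2 where
  carrier := {x | Memℓp (Jop lam w ⇑x) 2}
  add_mem' := by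
    intro x y hx hy
    show Memℓp (Jop lam w ⇑(x + y)) 2
    rw [lp.coeFn_add, Jop_add]
    exact hx.add hy
  zero_mem' := by
    show Memℓp (Jop lam w ⇑(0 : ℓ2)) 2
    have h0 : Jop lam w ⇑(0 : ℓ2) = 0 := by
      funext n; simp [Jop, lp.coeFn_zero]
    rw [h0]
    exact zero_memℓp
  smul_mem' := by
    intro c x hx
    show Memℓp (Jop lam w ⇑(c • x)) 2
    rw [lp.coeFn_smul, Jop_smul]
    exact hx.const_smul c

/-- The maximal operator `J_max` as a partially defined linear operator on `ℓ²(ℤ)`. -/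
def Jmax (lam w : ℤ → ℂ) : ℓ2 →ₗ.[ℂ] ℓ2 where
  domain := JmaxDom lam w
  toFun :=
    { toFun := fun x => (⟨Jop lam w ⇑(x : ℓ2), x.2⟩ : ℓ2)
      map_add' := by
        intro x y
        apply lp.ext
        rw [lp.coeFn_add]
        show Jop lam w ⇑((x : ℓ2) + (y : ℓ2)) = Jop lam w ⇑(x : ℓ2) + Jop lam w ⇑(y : ℓ2)
        rw [lp.coeFn_add, Jop_add]
      map_smul' := by
        intro c x
        apply lp.ext
        rw [lp.coeFn_smul]
        show Jop lam w ⇑(c • (x : ℓ2)) = c • Jop lam w ⇑(x : ℓ2)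
        rw [lp.coeFn_smul, Jop_smul] }

/-- The standard basis vector `e n` in `ℓ²(ℤ)`. -/
def eVec (n : ℤ) : ℓ2 := lp.single 2 n (1 : ℂ)

/-- The span of the standard basis vectors. -/
def stdSpan : Submodule ℂ ℓ2 := Submodule.span ℂ (Set.range eVec)

/-- The minimal operator `J_min`: the closure of the restriction of `𝒥` to the span of the
standard basis. -/
def Jmin (lam w : ℤ → ℂ) : ℓ2 →ₗ.[ℂ] ℓ2 :=
  ((Jmax lam w).domRestrict stdSpan).closure

/-- `z` is an eigenvalue of the partially defined operator `T`. -/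
def IsEV (T : ℓ2 →ₗ.[ℂ] ℓ2) (z : ℂ) : Prop :=
  ∃ x : T.domain, (x : ℓ2) ≠ 0 ∧ T x = z • (x : ℓ2)

/-- `z` belongs to the resolvent set of `T`: `T - z` is a bijection of `Dom T` onto `ℓ²(ℤ)`
with bounded (continuous linear) inverse. -/
def InRes (T : ℓ2 →ₗ.[ℂ] ℓ2) (z : ℂ) : Prop :=
  ∃ R : ℓ2 →L[ℂ] ℓ2,
    (∀ x : T.domain, R (T x - z • (x : ℓ2)) = x) ∧
    ∀ y : ℓ2, ∃ hy : R y ∈ T.domain, T ⟨R y, hy⟩ - z • (R y) = y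

/-- The spectrum of a partially defined operator. -/
def Spec (T : ℓ2 →ₗ.[ℂ] ℓ2) : Set ℂ := {z | ¬ InRes T z}

/-- `Ker (T - z)^n`. -/
def iterKer (T : ℓ2 →ₗ.[ℂ] ℓ2) (z : ℂ) : ℕ → Set ℓ2
  | 0 => {0}
  | n + 1 => {x | ∃ hx : x ∈ T.domain, ((T ⟨x, hx⟩ : ℓ2) - z • x) ∈ iterKer T z n}

/-- The set of generalized eigenvectors of `T` at `z`. -/
def genEig (T : ℓ2 →ₗ.[ℂ] ℓ2) (z : ℂ) : Set ℓ2 :=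
  {x | ∃ n : ℕ, x ∈ iterKer T z n}

/-- `Φ_p^+`. -/
def PhiP (lam : ℤ → ℂ) (p : ℕ) (z : ℂ) : ℂ :=
  ∏' n : ℕ, ((1 - lam ((n : ℤ) + 1) / z) *
    Complex.exp (∑ j ∈ Finset.Icc 1 (p - 1), (lam ((n : ℤ) + 1) / z) ^ j / (j : ℂ)))

/-- `Φ_p^-`. -/
def PhiM (lam : ℤ → ℂ) (p : ℕ) (z : ℂ) : ℂ :=
  ∏' n : ℕ, ((1 - lam (-(n : ℤ)) / z) *
    Complex.exp (∑ j ∈ Finset.Icc 1 (p - 1), (lam (-(n : ℤ)) / z) ^ j / (j : ℂ)))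

/-- `Ψ_p^+`. -/
def PsiP (lam : ℤ → ℂ) (p : ℕ) (z : ℂ) : ℂ :=
  ∏' n : ℕ, ((1 - z / lam ((n : ℤ) + 1)) *
    Complex.exp (∑ j ∈ Finset.Icc 1 (p - 1), (z / lam ((n : ℤ) + 1)) ^ j / (j : ℂ)))

/-- `Ψ_p^-`. -/
def PsiM (lam : ℤ → ℂ) (p : ℕ) (z : ℂ) : ℂ :=
  ∏' n : ℕ, ((1 - z / lam (-(n : ℤ))) *
    Complex.exp (∑ j ∈ Finset.Icc 1 (p - 1), (z / lam (-(n : ℤ))) ^ j / (j : ℂ)))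

end Jacobi

/-!
Writing `x k = γ k ^ 2 / (λ k - z)`, `𝔉 x` depends only on the products
`p k = x k * x (k + 1) = w k ^ 2 / ((λ k - z) (λ (k + 1) - z))`, and its `m`-th term sums `∏ p` over
increasing `(m + 1)`-tuples. Symmetrizing over permutations of the tuple bounds the part of that sum
coming from tuples that meet a set `S` by `(∑_S |p|) (∑ |p|) ^ m / m!`; hence replacing `p` by zero
off `S` moves `𝔉` by at most `(∑_{Sᶜ} |p|) exp (∑ |p|)`. On a compact `K ⊆ ℂ₀^λ` one has
`|p k (z)| ≤ C |p k (z₀)|`, so the finite sections, which are rational in `z`, converge uniformly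
on `K`, and the limit is holomorphic.
-/

namespace Jacobi

open scoped ENNReal Nat

section TupleSums

variable {ι : Type*}

lemma tsum_pi_fin_prod (c : ι → ℝ≥0∞) : ∀ n : ℕ, ∑' f : Fin n → ι, ∏ j, c (f j) = (∑' i, c i) ^ n
  | 0 => by simp
  | n + 1 => by
    rw [← (Fin.consEquiv fun _ => ι).tsum_eq, ENNReal.tsum_prod']
    simp [Fin.prod_univ_succ, Fin.consEquiv, ENNReal.tsum_mul_left, ENNReal.tsum_mul_right,
      tsum_pi_fin_prod c n, pow_succ']

lemma tsum_pi_fin_indicator_prod (c : ι → ℝ≥0∞) (S : Set ι) (n : ℕ) (j : Fin (n + 1)) :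
    ∑' f : Fin (n + 1) → ι, {f | f j ∈ S}.indicator (fun f => ∏ i, c (f i)) f
      = (∑' i, S.indicator c i) * (∑' i, c i) ^ n := by
  rw [← (Fin.insertNthEquiv (fun _ => ι) j).tsum_eq, ENNReal.tsum_prod']
  have hsplit : ∀ (a : ι) (g : Fin n → ι),
      {f : Fin (n + 1) → ι | f j ∈ S}.indicator (fun f => ∏ i, c (f i))
        (Fin.insertNthEquiv (fun _ => ι) j (a, g)) = S.indicator c a * ∏ i, c (g i) := by
    intro a g
    simp only [Set.indicator_apply, Set.mem_ofPred_eq, Fin.insertNthEquiv_apply,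
      Fin.insertNth_apply_same, Fin.prod_univ_succAbove _ j, Fin.insertNth_apply_succAbove]
    split_ifs <;> simp
  simp_rw [hsplit, ENNReal.tsum_mul_left, ENNReal.tsum_mul_right, tsum_pi_fin_prod]

end TupleSums

lemma Tup.strictMono {m : ℕ} (k : Tup m) : StrictMono k.1 :=
  Fin.strictMono_iff_lt_succ.2 fun j => by have := k.2 j; omega

lemma Tup.exists_notMem {m : ℕ} (k : Tup m) {s : Finset ℤ} (hs : s.card ≤ m) :
    ∃ j, k.1 j ∉ s := by
  by_contra! h
  have := Finset.card_le_card_of_injOn (s := Finset.univ) k.1 (fun j _ => h j)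
    k.strictMono.injective.injOn
  rw [Finset.card_univ, Fintype.card_fin] at this
  omega

/-- An admissible tuple is determined by its range, so composing with permutations embeds
`Tup m × Perm (Fin (m + 1))` into all tuples. -/
lemma factorial_mul_tsum_tup_le {m : ℕ} (G : (Fin (m + 1) → ℤ) → ℝ≥0∞)
    (hG : ∀ f (σ : Equiv.Perm (Fin (m + 1))), G (f ∘ σ) = G f) :
    (m + 1)! * ∑' k : Tup m, G k.1 ≤ ∑' f, G f := by
  have hinj : Function.Injective
      fun p : Tup m × Equiv.Perm (Fin (m + 1)) => (p.1.1 ∘ p.2 : Fin (m + 1) → ℤ) := by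
    rintro ⟨k, σ⟩ ⟨k', σ'⟩ h
    have hk : k.1 = k'.1 := (k.strictMono.range_inj k'.strictMono).1 <| by
      rw [← σ.surjective.range_comp k.1, ← σ'.surjective.range_comp k'.1]
      exact congrArg Set.range h
    refine Prod.ext (Subtype.ext hk) (Equiv.ext fun i => k.strictMono.injective ?_)
    exact (congrFun h i).trans (congrArg (· (σ' i)) hk.symm)
  calc (m + 1)! * ∑' k : Tup m, G k.1
      = ∑' p : Tup m × Equiv.Perm (Fin (m + 1)), G (p.1.1 ∘ p.2) := by
        rw [← ENNReal.tsum_mul_left, ENNReal.tsum_prod']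
        refine tsum_congr fun k => ?_
        simp [hG, tsum_fintype, Fintype.card_perm]
    _ ≤ ∑' f, G f := ENNReal.tsum_comp_le_tsum_of_injective hinj G

lemma tsum_tup_indicator_prod_le (c : ℤ → ℝ≥0∞) (S : Set ℤ) (m : ℕ) :
    ∑' k : Tup m, {k : Tup m | ∃ j, k.1 j ∈ S}.indicator (fun k => ∏ j, c (k.1 j)) k
      ≤ (∑' i, S.indicator c i) * (∑' i, c i) ^ m / m ! := by
  set G : (Fin (m + 1) → ℤ) → ℝ≥0∞ := {f | ∃ j, f j ∈ S}.indicator fun f => ∏ j, c (f j)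
  have hG : ∀ f (σ : Equiv.Perm (Fin (m + 1))), G (f ∘ σ) = G f := by
    intro f σ
    have hmem : (∃ j, f (σ j) ∈ S) ↔ ∃ j, f j ∈ S := σ.exists_congr_left.trans (by simp)
    simp only [G, Set.indicator_apply, Set.mem_ofPred_eq, Function.comp_apply, hmem,
      Equiv.prod_comp σ fun j => c (f j)]
  have hunion : ∀ f, G f ≤ ∑ j, {f : Fin (m + 1) → ℤ | f j ∈ S}.indicator
      (fun f => ∏ i, c (f i)) f := by
    intro f
    by_cases h : ∃ j, f j ∈ S
    · obtain ⟨j, hj⟩ := h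
      calc G f = {f : Fin (m + 1) → ℤ | f j ∈ S}.indicator (fun f => ∏ i, c (f i)) f := by
            simp [G, Set.indicator_of_mem, hj, show ∃ j, f j ∈ S from ⟨j, hj⟩]
        _ ≤ _ := Finset.single_le_sum (f := fun j => {f : Fin (m + 1) → ℤ | f j ∈ S}.indicator
            (fun f => ∏ i, c (f i)) f) (fun _ _ => zero_le) (Finset.mem_univ j)
    · simp [G, Set.indicator_of_notMem, h]
  have hmain : (m + 1 : ℝ≥0∞) * ((m ! : ℝ≥0∞) * ∑' k : Tup m, G k.1)
      ≤ (m + 1 : ℝ≥0∞) * ((∑' i, S.indicator c i) * (∑' i, c i) ^ m) := by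
    calc (m + 1 : ℝ≥0∞) * ((m ! : ℝ≥0∞) * ∑' k : Tup m, G k.1)
        = (m + 1)! * ∑' k : Tup m, G k.1 := by push_cast [Nat.factorial_succ]; ring
      _ ≤ ∑' f, G f := factorial_mul_tsum_tup_le G hG
      _ ≤ ∑' f, ∑ j, {f : Fin (m + 1) → ℤ | f j ∈ S}.indicator (fun f => ∏ i, c (f i)) f :=
        ENNReal.tsum_le_tsum hunion
      _ = (m + 1 : ℝ≥0∞) * ((∑' i, S.indicator c i) * (∑' i, c i) ^ m) := by
        rw [Summable.tsum_finsetSum fun _ _ => ENNReal.summable]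
        simp [tsum_pi_fin_indicator_prod]
  rw [ENNReal.le_div_iff_mul_le (by simp [Nat.factorial_ne_zero]) (by simp), mul_comm]
  exact (ENNReal.mul_le_mul_iff_right (by positivity) (by simp)).1 hmain

/-- `𝔉 x` depends on `x` only through the products `x k * x (k + 1)`; `pairFF` is `𝔉` as a
function of these products. -/
def pairFF (p : ℤ → ℂ) : ℂ :=
  1 + ∑' m : ℕ, (-1 : ℂ) ^ (m + 1) * ∑' k : Tup m, ∏ j, p (k.1 j)

lemma FF_eq_pairFF (x : ℤ → ℂ) : FF x = pairFF fun k => x k * x (k + 1) := rfl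

lemma FF_neg (x : ℤ → ℂ) : FF (-x) = FF x := by
  simp [FF_eq_pairFF]

lemma FFon_Icc (a b : ℤ) (x : ℤ → ℂ) :
    FFon (Set.Icc a b) x = pairFF ((Set.Ico a b).indicator fun k => x k * x (k + 1)) := by
  rw [FFon, FF_eq_pairFF]
  congr 1
  funext k
  simp only [Set.indicator_apply, Set.mem_Icc, Set.mem_Ico]
  split_ifs <;> first | rfl | (exfalso; omega) | simp

section Estimates

lemma enorm_tsum_sub_tsum_le {ι E : Type*} [NormedAddCommGroup E] [CompleteSpace E]
    {f g : ι → E} (hf : ∑' i, ‖f i‖ₑ ≠ ⊤) (hg : ∑' i, ‖g i‖ₑ ≠ ⊤) :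
    ‖∑' i, f i - ∑' i, g i‖ₑ ≤ ∑' i, ‖f i - g i‖ₑ := by
  rw [← (Summable.of_enorm hf).tsum_sub (Summable.of_enorm hg)]
  exact enorm_tsum_le_tsum_enorm

lemma tsum_ofReal_pow_div_factorial {x : ℝ} (hx : 0 ≤ x) :
    ∑' m : ℕ, ENNReal.ofReal x ^ m / m ! = ENNReal.ofReal (Real.exp x) := by
  rw [Real.exp_eq_exp_ℝ, NormedSpace.exp_eq_tsum_div,
    ENNReal.ofReal_tsum_of_nonneg (fun m => by positivity) (Real.summable_pow_div_factorial x)]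
  refine tsum_congr fun m => ?_
  rw [ENNReal.ofReal_div_of_pos (by positivity), ENNReal.ofReal_pow hx, ENNReal.ofReal_natCast]

lemma tsum_pow_div_factorial_ne_top {B : ℝ≥0∞} (hB : B ≠ ⊤) :
    ∑' m : ℕ, B ^ m / m ! ≠ ⊤ := by
  rw [← ENNReal.ofReal_toReal hB, tsum_ofReal_pow_div_factorial ENNReal.toReal_nonneg]
  exact ENNReal.ofReal_ne_top

variable (p : ℤ → ℂ)

lemma enorm_prod_sub_prod_indicator_le (S : Set ℤ) {m : ℕ} (k : Tup m) :
    ‖∏ j, p (k.1 j) - ∏ j, S.indicator p (k.1 j)‖ₑ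
      ≤ {k : Tup m | ∃ j, k.1 j ∈ Sᶜ}.indicator (fun k => ∏ j, ‖p (k.1 j)‖ₑ) k := by
  by_cases h : ∃ j, k.1 j ∈ Sᶜ
  · obtain ⟨j, hj⟩ := h
    rw [Set.indicator_of_mem (show k ∈ {k : Tup m | ∃ j, k.1 j ∈ Sᶜ} from ⟨j, hj⟩),
      Finset.prod_eq_zero (f := fun j => S.indicator p (k.1 j)) (Finset.mem_univ j)
        (Set.indicator_of_notMem hj p), sub_zero]
    simp [enorm_eq_nnnorm, nnnorm_prod]
  · push Not at h
    have hk : ∀ j, S.indicator p (k.1 j) = p (k.1 j) := fun j =>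
      Set.indicator_of_mem (by simpa using h j) p
    simp [hk]

lemma tsum_enorm_prod_sub_prod_indicator_le (S : Set ℤ) (m : ℕ) :
    ∑' k : Tup m, ‖∏ j, p (k.1 j) - ∏ j, S.indicator p (k.1 j)‖ₑ
      ≤ (∑' i, Sᶜ.indicator (‖p ·‖ₑ) i) * (∑' i, ‖p i‖ₑ) ^ m / m ! :=
  (ENNReal.tsum_le_tsum (enorm_prod_sub_prod_indicator_le p S)).trans
    (tsum_tup_indicator_prod_le _ _ m)

lemma tsum_enorm_prod_le (m : ℕ) :
    ∑' k : Tup m, ‖∏ j, p (k.1 j)‖ₑ ≤ (∑' i, ‖p i‖ₑ) ^ (m + 1) / m ! := by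
  simpa [pow_succ'] using tsum_enorm_prod_sub_prod_indicator_le p ∅ m

variable {p}

lemma tsum_enorm_prod_ne_top (hp : ∑' i, ‖p i‖ₑ ≠ ⊤) (m : ℕ) :
    ∑' k : Tup m, ‖∏ j, p (k.1 j)‖ₑ ≠ ⊤ :=
  ne_top_of_le_ne_top (ENNReal.div_ne_top (ENNReal.pow_ne_top hp) (by simp [m.factorial_ne_zero]))
    (tsum_enorm_prod_le p m)

lemma tsum_enorm_pairFF_term_ne_top (hp : ∑' i, ‖p i‖ₑ ≠ ⊤) :
    ∑' m : ℕ, ‖(-1 : ℂ) ^ (m + 1) * ∑' k : Tup m, ∏ j, p (k.1 j)‖ₑ ≠ ⊤ := by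
  refine ne_top_of_le_ne_top (b := ∑' m : ℕ, (∑' i, ‖p i‖ₑ) * ((∑' i, ‖p i‖ₑ) ^ m / m !)) ?_
    (ENNReal.tsum_le_tsum fun m => ?_)
  · rw [ENNReal.tsum_mul_left]
    exact ENNReal.mul_ne_top hp (tsum_pow_div_factorial_ne_top hp)
  · rw [enorm_mul, enorm_pow, enorm_neg, enorm_one, one_pow, one_mul, ← mul_div_assoc, ← pow_succ']
    exact enorm_tsum_le_tsum_enorm.trans (tsum_enorm_prod_le p m)

lemma enorm_pairFF_sub_pairFF_indicator_le (hp : ∑' i, ‖p i‖ₑ ≠ ⊤) (S : Set ℤ) :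
    ‖pairFF p - pairFF (S.indicator p)‖ₑ
      ≤ (∑' i, Sᶜ.indicator (‖p ·‖ₑ) i) * ∑' m : ℕ, (∑' i, ‖p i‖ₑ) ^ m / m ! := by
  have hq : ∑' i, ‖S.indicator p i‖ₑ ≠ ⊤ := ne_top_of_le_ne_top hp <|
    ENNReal.tsum_le_tsum fun i => by by_cases h : i ∈ S <;> simp [h]
  calc ‖pairFF p - pairFF (S.indicator p)‖ₑ
      ≤ ∑' m : ℕ, ‖(-1 : ℂ) ^ (m + 1) * ∑' k : Tup m, ∏ j, p (k.1 j)
          - (-1 : ℂ) ^ (m + 1) * ∑' k : Tup m, ∏ j, S.indicator p (k.1 j)‖ₑ := by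
        rw [pairFF, pairFF, add_sub_add_left_eq_sub]
        exact enorm_tsum_sub_tsum_le (tsum_enorm_pairFF_term_ne_top hp)
          (tsum_enorm_pairFF_term_ne_top hq)
    _ = ∑' m : ℕ, ‖∑' k : Tup m, ∏ j, p (k.1 j) - ∑' k : Tup m, ∏ j, S.indicator p (k.1 j)‖ₑ := by
        simp_rw [← mul_sub, enorm_mul, enorm_pow, enorm_neg, enorm_one, one_pow, one_mul]
    _ ≤ ∑' m : ℕ, ∑' k : Tup m, ‖∏ j, p (k.1 j) - ∏ j, S.indicator p (k.1 j)‖ₑ :=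
        ENNReal.tsum_le_tsum fun m =>
          enorm_tsum_sub_tsum_le (tsum_enorm_prod_ne_top hp m) (tsum_enorm_prod_ne_top hq m)
    _ ≤ ∑' m : ℕ, (∑' i, Sᶜ.indicator (‖p ·‖ₑ) i) * ((∑' i, ‖p i‖ₑ) ^ m / m !) :=
        ENNReal.tsum_le_tsum fun m =>
          (tsum_enorm_prod_sub_prod_indicator_le p S m).trans_eq (mul_div_assoc _ _ _)
    _ = _ := ENNReal.tsum_mul_left

theorem norm_pairFF_sub_pairFF_indicator_le (hp : Summable fun i => ‖p i‖) (S : Set ℤ) :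
    ‖pairFF p - pairFF (S.indicator p)‖
      ≤ (∑' i, Sᶜ.indicator (‖p ·‖) i) * Real.exp (∑' i, ‖p i‖) := by
  have hB : ∑' i, ‖p i‖ₑ = ENNReal.ofReal (∑' i, ‖p i‖) := by
    simp [ENNReal.ofReal_tsum_of_nonneg (fun _ => norm_nonneg _) hp, ofReal_norm]
  have hT : ∑' i, Sᶜ.indicator (‖p ·‖ₑ) i = ENNReal.ofReal (∑' i, Sᶜ.indicator (‖p ·‖) i) := by
    rw [ENNReal.ofReal_tsum_of_nonneg (fun _ => Set.indicator_nonneg (fun _ _ => norm_nonneg _) _)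
      (hp.indicator _)]
    refine tsum_congr fun i => ?_
    by_cases h : i ∈ Sᶜ <;> simp [h, ofReal_norm]
  have hT₀ : 0 ≤ ∑' i, Sᶜ.indicator (‖p ·‖) i :=
    tsum_nonneg fun _ => Set.indicator_nonneg (fun _ _ => norm_nonneg _) _
  have h := enorm_pairFF_sub_pairFF_indicator_le (hB ▸ ENNReal.ofReal_ne_top) S
  rw [hT, hB, tsum_ofReal_pow_div_factorial (tsum_nonneg fun _ => norm_nonneg _),
    ← ENNReal.ofReal_mul hT₀, ← ofReal_norm] at h
  exact (ENNReal.ofReal_le_ofReal_iff (mul_nonneg hT₀ (Real.exp_pos _).le)).1 h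

end Estimates

lemma differentiableOn_tsum_of_finite {ι : Type*} {f : ι → ℂ → ℂ} {U : Set ℂ}
    (hfin : {i | ∃ z, f i z ≠ 0}.Finite) (hf : ∀ i, DifferentiableOn ℂ (f i) U) :
    DifferentiableOn ℂ (fun z => ∑' i, f i z) U := by
  have hsum : (fun z => ∑' i, f i z) = fun z => ∑ i ∈ hfin.toFinset, f i z := by
    funext z
    refine tsum_eq_sum fun i hi => ?_
    by_contra h
    exact hi (hfin.mem_toFinset.2 ⟨z, h⟩)
  rw [hsum]
  exact DifferentiableOn.fun_sum fun i _ => hf i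

lemma differentiableOn_pairFF_indicator {p : ℂ → ℤ → ℂ} {U : Set ℂ} (s : Finset ℤ)
    (hp : ∀ k, DifferentiableOn ℂ (p · k) U) :
    DifferentiableOn ℂ (fun z => pairFF ((s : Set ℤ).indicator (p z))) U := by
  have hprod : ∀ {m : ℕ} (k : Tup m), (∃ j, k.1 j ∉ s) →
      ∀ z, ∏ j, (s : Set ℤ).indicator (p z) (k.1 j) = 0 := by
    rintro m k ⟨j, hj⟩ z
    exact Finset.prod_eq_zero (Finset.mem_univ j) (Set.indicator_of_notMem hj _)
  refine (differentiableOn_const 1).add (differentiableOn_tsum_of_finite ?_ fun m => ?_)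
  · refine (Set.finite_Iio s.card).subset fun m ⟨z, hz⟩ => ?_
    by_contra! hm
    exact hz (by simp [hprod _ (Tup.exists_notMem _ (not_lt.1 hm))])
  refine (differentiableOn_const _).mul (differentiableOn_tsum_of_finite ?_ fun k => ?_)
  · refine (Set.Finite.pi fun _ => s.finite_toSet).preimage Subtype.val_injective.injOn |>.subset
      fun k ⟨z, hz⟩ => ?_
    by_contra! hk
    simp only [Set.mem_preimage, Set.mem_pi, Set.mem_univ, true_implies, not_forall] at hk
    exact hz (hprod k hk z)
  refine DifferentiableOn.fun_finsetProd fun j _ => ?_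
  by_cases h : k.1 j ∈ s
  · simpa [h] using hp (k.1 j)
  · simp [h]

lemma exists_norm_sub_le_mul_norm_sub {E : Type*} [NormedAddCommGroup E] {K F : Set E}
    (hK : IsCompact K) (hF : IsClosed F) (hKF : Disjoint K F) (z₀ : E) :
    ∃ C, 0 ≤ C ∧ ∀ z ∈ K, ∀ u ∈ F, ‖u - z₀‖ ≤ C * ‖u - z‖ := by
  obtain ⟨δ, hδ, hδKF⟩ := Metric.exists_pos_forall_lt_edist hK hF hKF
  obtain ⟨M, hM, hKM⟩ := hK.isBounded.subset_closedBall_lt 0 z₀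
  refine ⟨1 + M / δ, by positivity, fun z hz u hu => ?_⟩
  have hzu : (δ : ℝ) ≤ ‖u - z‖ := by
    have h := hδKF z hz u hu
    rw [edist_nndist, ENNReal.coe_lt_coe, ← NNReal.coe_lt_coe, coe_nndist, dist_eq_norm,
      norm_sub_rev] at h
    exact h.le
  have hz₀ : ‖z - z₀‖ ≤ M := by simpa [dist_eq_norm] using hKM hz
  calc ‖u - z₀‖ ≤ ‖u - z‖ + ‖z - z₀‖ := norm_sub_le_norm_sub_add_norm_sub u z z₀
    _ ≤ ‖u - z‖ + M / δ * δ := by rw [div_mul_cancel₀ M (by positivity)]; linarith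
    _ ≤ ‖u - z‖ + M / δ * ‖u - z‖ := by gcongr
    _ = (1 + M / δ) * ‖u - z‖ := by ring

lemma tendsto_tsum_indicator_compl_Ico (f : ℤ → ℝ) :
    Tendsto (fun n : ℕ => ∑' i, (Set.Ico (-(n : ℤ)) n)ᶜ.indicator f i) atTop (𝓝 0) := by
  have hIco : Tendsto (fun n : ℕ => Finset.Ico (-(n : ℤ)) n) atTop atTop :=
    tendsto_atTop_finset_of_monotone
      (fun a b hab => Finset.Ico_subset_Ico (by omega) (by omega))
      fun i => ⟨i.natAbs + 1, by simp only [Finset.mem_Ico]; omega⟩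
  refine ((tendsto_tsum_compl_atTop_zero f).comp hIco).congr fun n => ?_
  rw [Function.comp_apply, ← Finset.coe_Ico]
  exact tsum_subtype ((Finset.Ico (-(n : ℤ)) n : Set ℤ)ᶜ) f

section JacobiParameters

variable {lam w γ : ℤ → ℂ}

def pairTerm (lam w : ℤ → ℂ) (z : ℂ) (k : ℤ) : ℂ :=
  w k ^ 2 / ((lam k - z) * (lam (k + 1) - z))

lemma sub_ne_zero_of_mem_C0 {z : ℂ} (hz : z ∈ C0 lam) (k : ℤ) : lam k - z ≠ 0 :=
  sub_ne_zero.2 fun h => hz (h ▸ subset_closure ⟨k, rfl⟩)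

lemma differentiableOn_pairTerm (k : ℤ) :
    DifferentiableOn ℂ (fun z => pairTerm lam w z k) (C0 lam) :=
  (differentiableOn_const _).div
    (((differentiableOn_const _).sub differentiableOn_id).mul
      ((differentiableOn_const _).sub differentiableOn_id))
    fun _ hz => mul_ne_zero (sub_ne_zero_of_mem_C0 hz k) (sub_ne_zero_of_mem_C0 hz (k + 1))

lemma mul_eq_pairTerm (hγ : ∀ n, γ n * γ (n + 1) = w n) (z : ℂ) (k : ℤ) :
    γ k ^ 2 / (lam k - z) * (γ (k + 1) ^ 2 / (lam (k + 1) - z)) = pairTerm lam w z k := by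
  rw [div_mul_div_comm, ← mul_pow, hγ, pairTerm]

lemma charF_eq_pairFF (hγ : ∀ n, γ n * γ (n + 1) = w n) (z : ℂ) :
    charF lam γ z = pairFF (pairTerm lam w z) := by
  have hneg : (fun n => γ n ^ 2 / (z - lam n)) = -fun n => γ n ^ 2 / (lam n - z) := by
    funext n
    rw [Pi.neg_apply, ← div_neg, neg_sub]
  rw [charF, hneg, FF_neg, FF_eq_pairFF]
  simp_rw [mul_eq_pairTerm hγ]

lemma FFon_Icc_eq_pairFF (hγ : ∀ n, γ n * γ (n + 1) = w n) (a b : ℤ) (z : ℂ) :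
    FFon (Set.Icc a b) (fun k => γ k ^ 2 / (lam k - z))
      = pairFF ((Set.Ico a b).indicator (pairTerm lam w z)) := by
  simp_rw [FFon_Icc, mul_eq_pairTerm hγ]

lemma differentiableOn_FFon_Icc (hγ : ∀ n, γ n * γ (n + 1) = w n) (a b : ℤ) :
    DifferentiableOn ℂ (fun z => FFon (Set.Icc a b) fun k => γ k ^ 2 / (lam k - z)) (C0 lam) :=
  (differentiableOn_pairFF_indicator (Finset.Ico a b) differentiableOn_pairTerm).congr
    fun z _ => by rw [FFon_Icc_eq_pairFF hγ, Finset.coe_Ico]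

lemma exists_norm_pairTerm_le {z₀ : ℂ} (hz₀ : z₀ ∈ C0 lam) {K : Set ℂ} (hK : IsCompact K)
    (hKC : K ⊆ C0 lam) :
    ∃ C, 0 ≤ C ∧ ∀ z ∈ K, ∀ k, ‖pairTerm lam w z k‖ ≤ C * ‖pairTerm lam w z₀ k‖ := by
  obtain ⟨C, hC0, hC⟩ := exists_norm_sub_le_mul_norm_sub hK isClosed_closure
    (Set.subset_compl_iff_disjoint_right.1 hKC) z₀
  refine ⟨C ^ 2, by positivity, fun z hz k => ?_⟩
  have h₁ := hC z hz _ (subset_closure ⟨k, rfl⟩)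
  have h₂ := hC z hz _ (subset_closure ⟨k + 1, rfl⟩)
  have hpos : ∀ z ∈ C0 lam, ∀ k, 0 < ‖lam k - z‖ := fun z hz k =>
    norm_pos_iff.2 (sub_ne_zero_of_mem_C0 hz k)
  simp only [pairTerm, norm_div, norm_mul]
  rw [← mul_div_assoc, div_le_div_iff₀ (mul_pos (hpos z (hKC hz) k) (hpos z (hKC hz) (k + 1)))
    (mul_pos (hpos z₀ hz₀ k) (hpos z₀ hz₀ (k + 1)))]
  calc ‖w k ^ 2‖ * (‖lam k - z₀‖ * ‖lam (k + 1) - z₀‖)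
      ≤ ‖w k ^ 2‖ * ((C * ‖lam k - z‖) * (C * ‖lam (k + 1) - z‖)) := by gcongr
    _ = C ^ 2 * ‖w k ^ 2‖ * (‖lam k - z‖ * ‖lam (k + 1) - z‖) := by ring

lemma tendstoUniformlyOn_FFon_Icc (hγ : ∀ n, γ n * γ (n + 1) = w n) {z₀ : ℂ}
    (hz₀ : z₀ ∈ C0 lam) (hsum : Summable fun k => ‖pairTerm lam w z₀ k‖) {K : Set ℂ}
    (hK : IsCompact K) (hKC : K ⊆ C0 lam) :
    TendstoUniformlyOn
      (fun (n : ℕ) z => FFon (Set.Icc (-(n : ℤ)) n) fun k => γ k ^ 2 / (lam k - z))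
      (charF lam γ) atTop K := by
  obtain ⟨C, hC0, hC⟩ := exists_norm_pairTerm_le (w := w) hz₀ hK hKC
  set tail : ℕ → ℝ := fun n => ∑' i, (Set.Ico (-(n : ℤ)) n)ᶜ.indicator (‖pairTerm lam w z₀ ·‖) i
  have hbound : ∀ n : ℕ, ∀ z ∈ K, dist (charF lam γ z)
      (FFon (Set.Icc (-(n : ℤ)) n) fun k => γ k ^ 2 / (lam k - z))
        ≤ C * tail n * Real.exp (C * ∑' k, ‖pairTerm lam w z₀ k‖) := by
    intro n z hz
    have hle := hC z hz
    have hsumz : Summable fun k => ‖pairTerm lam w z k‖ :=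
      (hsum.mul_left C).of_nonneg_of_le (fun _ => norm_nonneg _) hle
    rw [dist_eq_norm, charF_eq_pairFF hγ, FFon_Icc_eq_pairFF hγ]
    refine (norm_pairFF_sub_pairFF_indicator_le hsumz _).trans ?_
    gcongr ?_ * Real.exp ?_
    · exact mul_nonneg hC0 (tsum_nonneg fun _ => Set.indicator_nonneg (fun _ _ => norm_nonneg _) _)
    · rw [← tsum_mul_left]
      refine (hsumz.indicator _).tsum_le_tsum (fun i => ?_) ((hsum.indicator _).mul_left C)
      by_cases h : i ∈ (Set.Ico (-(n : ℤ)) n)ᶜ <;> simp [h, hle i]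
    · rw [← tsum_mul_left]
      exact hsumz.tsum_le_tsum hle (hsum.mul_left C)
  have hlim : Tendsto (fun n => C * tail n * Real.exp (C * ∑' k, ‖pairTerm lam w z₀ k‖))
      atTop (𝓝 0) := by
    simpa using ((tendsto_tsum_indicator_compl_Ico _).const_mul C).mul_const
      (Real.exp (C * ∑' k, ‖pairTerm lam w z₀ k‖))
  rw [Metric.tendstoUniformlyOn_iff]
  intro ε hε
  filter_upwards [hlim.eventually (gt_mem_nhds hε)] with n hn z hz
  exact (hbound n z hz).trans_lt hn

end JacobiParameters

end Jacobi

theorem statement1_general (lam w γ : ℤ → ℂ)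
    (hγ : ∀ n, γ n * γ (n + 1) = w n) (hconv : Jacobi.ConvCond lam w) :
    (∀ z ∈ Jacobi.C0 lam, AnalyticAt ℂ (Jacobi.charF lam γ) z) ∧
    TendstoLocallyUniformlyOn
      (fun (n : ℕ) (z : ℂ) =>
        Jacobi.FFon (Set.Icc (-(n : ℤ)) (n : ℤ)) fun k => γ k ^ 2 / (lam k - z))
      (Jacobi.charF lam γ) atTop (Jacobi.C0 lam) ∧
    ∀ z ∈ Jacobi.C0 lam,
      Tendsto
        (fun n : ℕ => Jacobi.FFon (Set.Icc (-(n : ℤ)) (n : ℤ)) fun k => γ k ^ 2 / (lam k - z))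
        atTop (𝓝 (Jacobi.charF lam γ z)) := by
  obtain ⟨z₀, hz₀, hsum⟩ := hconv
  have hopen : IsOpen (Jacobi.C0 lam) := isClosed_closure.isOpen_compl
  have hlim : TendstoLocallyUniformlyOn
      (fun (n : ℕ) (z : ℂ) =>
        Jacobi.FFon (Set.Icc (-(n : ℤ)) (n : ℤ)) fun k => γ k ^ 2 / (lam k - z))
      (Jacobi.charF lam γ) atTop (Jacobi.C0 lam) :=
    (tendstoLocallyUniformlyOn_iff_forall_isCompact hopen).2 fun _ hKC hK =>
      Jacobi.tendstoUniformlyOn_FFon_Icc hγ hz₀ hsum hK hKC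
  have hdiff : DifferentiableOn ℂ (Jacobi.charF lam γ) (Jacobi.C0 lam) :=
    hlim.differentiableOn (Eventually.of_forall fun n => Jacobi.differentiableOn_FFon_Icc hγ _ _)
      hopen
  exact ⟨fun z hz => hdiff.analyticAt (hopen.mem_nhds hz), hlim, fun z hz => hlim.tendsto_at hz⟩

/-- analyticity of the characteristic function on `ℂ₀^λ` and its locally
uniform approximation by finite sections. -/
theorem statement1 (lam w γ : ℤ → ℂ) (hw : ∀ n, w n ≠ 0)
    (hγ : ∀ n, γ n * γ (n + 1) = w n) (hconv : Jacobi.ConvCond lam w) :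
    (∀ z ∈ Jacobi.C0 lam, AnalyticAt ℂ (Jacobi.charF lam γ) z) ∧
    TendstoLocallyUniformlyOn
      (fun (n : ℕ) (z : ℂ) =>
        Jacobi.FFon (Set.Icc (-(n : ℤ)) (n : ℤ)) fun k => γ k ^ 2 / (lam k - z))
      (Jacobi.charF lam γ) atTop (Jacobi.C0 lam) ∧
    ∀ z ∈ Jacobi.C0 lam,
      Tendsto
        (fun n : ℕ => Jacobi.FFon (Set.Icc (-(n : ℤ)) (n : ℤ)) fun k => γ k ^ 2 / (lam k - z))
        atTop (𝓝 (Jacobi.charF lam γ z)) :=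
  statement1_general lam w γ hγ hconv
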